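/- Assume regularity and the relaxed non-degeneracy condition: there exists H* ⊆ H such that the columns {W_{:,h}}_{h ∈ H*} are linearly independent, supp(b) ⊆ H*, and there exists B ⊆ H with H* = ∪_{h ∈ B} supp(A_{:,h}). Then there exist a prompt vector π ∈ [0,1]^{|H|} and u ∈ ℝ^{|X|} such that for all x ∈ X^T with P(X_{1:T} = x) > 0: 1(b^T P(H_0 | X_{1:T} = x) ≥ 0) = 1(u^T v(x) ≥ 0), where v(x) = P(X̂_2 | X̂_1 = z̃, X̂_{3:T+2} = x) if P(X̂_1 = z̃, X̂_{3:T+2} = x) > 0 and v(x) = 0 otherwise, with X̂ the length-(T+2) modified sequence induced by π. -/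

import Mathlib

/-!
With the prompt `π = 𝟙_B`, the weight `P(X̂_1 = z̃, H_2 = g, X̂_{3:T+2} = x)` factors as
`ν_g · P(X_{1:T} = x | H_0 = g)` with `ν_g = P(X̂_1 = z̃, H_2 = g)`. Ergodicity and full support
give `P(H_1 = h) > 0` for every `h`, so `ν` is positive exactly on `H*`. As the emission columns
over `H*` are linearly independent, some readout `u` has `uᵀ W_{:,g} = b_g μ_g / ν_g` on `H*`;
then `uᵀ v(x)` and `bᵀ P(H_0 | X_{1:T} = x)` are positive multiples of the same sum
`∑_g b_g μ_g P(X_{1:T} = x | H_0 = g)`.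
-/

open scoped Classical

noncomputable section

/-- Forward pass for a Markov chain with transition matrix `A`. -/
def fwdVec {H : Type*} [Fintype H] (A : Matrix H H ℝ) :
    (H → ℝ) → List (H → ℝ) → (H → ℝ)
  | μ, [] => μ
  | μ, v :: vs => fwdVec A (A.mulVec fun h => μ h * v h) vs

/-- `hmmLik A W x h = P(X_{1:t} = x | H_0 = h)`. -/
def hmmLik {H X : Type*} [Fintype H] (A : Matrix H H ℝ)
    (W : X → H → ℝ) : List X → H → ℝ
  | [], _ => 1
  | z :: xs, h => ∑ h' : H, A h' h * W z h' * hmmLik A W xs h'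

/-- `phatH2 A μ W π x g = P(X̂_1 = z̃, H_2 = g, X̂_{3:T+2} = x)` for the
length-`(T+2)` modified sequence `X̂` induced by the prompt `π`. -/
def phatH2 {H X : Type*} [Fintype H] [DecidableEq H] (A : Matrix H H ℝ)
    (μ : H → ℝ) (W : X → H → ℝ) (π : H → ℝ) {T : ℕ} (x : Fin T → X)
    (g : H) : ℝ :=
  ∑ h, fwdVec A (A.mulVec μ)
    (π :: (fun g' => if g' = g then 1 else 0)
      :: List.ofFn fun k : Fin T => fun g' => W (x k) g') h

open Finset Matrix

section Sign

variable {ι : Type*} [Fintype ι]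

lemma sum_mul_div_sum_nonneg_iff (b w : ι → ℝ) (hw : 0 < ∑ i, w i) :
    0 ≤ ∑ i, b i * (w i / ∑ j, w j) ↔ 0 ≤ ∑ i, b i * w i := by
  simp_rw [← mul_div_assoc, ← sum_div]
  rw [le_div_iff₀ hw, zero_mul]

lemma sum_mul_condMean_nonneg_iff {X : Type*} [Fintype X] (u : X → ℝ) (W : X → ι → ℝ)
    {p : ι → ℝ} (hp : ∀ i, 0 ≤ p i) :
    0 ≤ ∑ z, u z *
        (if 0 < ∑ i, p i then (∑ i, W z i * p i) / ∑ i, p i else 0) ↔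
      0 ≤ ∑ i, (∑ z, u z * W z i) * p i := by
  split_ifs with hpos
  · have hswap : ∑ z, u z * ∑ i, W z i * p i = ∑ i, (∑ z, u z * W z i) * p i := by
      simp only [mul_sum, sum_mul]
      rw [sum_comm]
      exact sum_congr rfl fun _ _ => sum_congr rfl fun _ _ => by ring
    simp_rw [← mul_div_assoc, ← sum_div, hswap]
    rw [le_div_iff₀ hpos, zero_mul]
  · have hzero : ∀ i, p i = 0 :=
      fun i => (sum_eq_zero_iff_of_nonneg fun j _ => hp j).1
        (le_antisymm (not_lt.1 hpos) (sum_nonneg fun j _ => hp j)) i (mem_univ i)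
    simp [hzero]

end Sign

lemma exists_sum_mul_eq_of_linearIndependent {ι X F : Type*} [Finite ι] [Fintype X] [Field F]
    {f : ι → X → F} (hf : LinearIndependent F f) (t : ι → F) :
    ∃ u : X → F, ∀ i, ∑ z, u z * f i z = t i := by
  have ht : t ∈ Submodule.span F (Set.range (flip f)) := by
    rw [span_flip_eq_top_iff_linearIndependent.2 hf]
    exact Submodule.mem_top
  obtain ⟨u, hu⟩ := (Submodule.mem_span_range_iff_exists_fun F).1 ht
  exact ⟨u, fun i => by simpa [flip] using congrFun hu i⟩

section Chain

variable {H : Type*} [Fintype H] {A : Matrix H H ℝ}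

lemma mulVec_pos_of_pow_succ_diag_pos [DecidableEq H] (hA0 : ∀ h h', 0 ≤ A h' h) {n : ℕ}
    (hpow : ∀ h, 0 < (A ^ (n + 1)) h h) {μ : H → ℝ} (hμ : ∀ h, 0 < μ h) (h : H) :
    0 < (A *ᵥ μ) h := by
  have hrow : ∑ k, A h k * (A ^ n) k h ≠ 0 := by
    rw [← mul_apply, ← pow_succ']
    exact (hpow h).ne'
  obtain ⟨k, -, hk⟩ := exists_ne_zero_of_sum_ne_zero hrow
  refine sum_pos' (fun j _ => mul_nonneg (hA0 j h) (hμ j).le) ⟨k, mem_univ k, ?_⟩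
  exact mul_pos ((hA0 k h).lt_of_ne (left_ne_zero_of_mul hk).symm) (hμ k)

variable [DecidableEq H] (hA0 : ∀ h h', 0 ≤ A h' h) {ρ : H → ℝ} (B : Finset H)
include hA0

lemma mulVec_mul_indicator_nonneg (hρ : ∀ h, 0 ≤ ρ h) (g : H) :
    0 ≤ (A *ᵥ fun h => ρ h * if h ∈ B then 1 else 0) g :=
  sum_nonneg fun h _ => mul_nonneg (hA0 h g) (mul_nonneg (hρ h) (by split_ifs <;> norm_num))

lemma mulVec_mul_indicator_pos_iff (hρ : ∀ h, 0 < ρ h) (g : H) :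
    0 < (A *ᵥ fun h => ρ h * if h ∈ B then 1 else 0) g ↔ ∃ h ∈ B, A g h ≠ 0 := by
  have hterm : ∀ h ∈ univ, 0 ≤ A g h * (ρ h * if h ∈ B then 1 else 0) :=
    fun h _ => mul_nonneg (hA0 h g) (mul_nonneg (hρ h).le (by split_ifs <;> norm_num))
  rw [mulVec, dotProduct, sum_pos_iff_of_nonneg hterm]
  constructor
  · rintro ⟨h, -, hpos⟩
    by_cases hB : h ∈ B
    · exact ⟨h, hB, left_ne_zero_of_mul hpos.ne'⟩
    · simp [hB] at hpos
  · rintro ⟨h, hB, hne⟩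
    refine ⟨h, mem_univ h, ?_⟩
    simpa [hB] using mul_pos ((hA0 h g).lt_of_ne hne.symm) (hρ h)

end Chain

section HMM

variable {H X : Type*} [Fintype H] {A : Matrix H H ℝ} {W : X → H → ℝ}

lemma hmmLik_nonneg (hA0 : ∀ h h', 0 ≤ A h' h) (hW0 : ∀ z h, 0 ≤ W z h) :
    ∀ (xs : List X) (h : H), 0 ≤ hmmLik A W xs h
  | [], _ => by simp [hmmLik]
  | z :: xs, h => sum_nonneg fun h' _ =>
      mul_nonneg (mul_nonneg (hA0 _ _) (hW0 _ _)) (hmmLik_nonneg hA0 hW0 xs h')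

lemma sum_fwdVec_mulVec_map (hA1 : ∀ h, ∑ h', A h' h = 1) :
    ∀ (xs : List X) (ν : H → ℝ),
      ∑ h, fwdVec A (A *ᵥ ν) (xs.map fun z h => W z h) h = ∑ h, ν h * hmmLik A W xs h
  | [], ν => by
    simp only [List.map_nil, fwdVec, hmmLik, mul_one, mulVec, dotProduct]
    rw [sum_comm]
    simp [← sum_mul, hA1]
  | z :: xs, ν => by
    simp only [List.map_cons, fwdVec]
    rw [sum_fwdVec_mulVec_map hA1 xs]
    simp only [mulVec, dotProduct, hmmLik, sum_mul, mul_sum]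
    rw [sum_comm]
    exact sum_congr rfl fun _ _ => sum_congr rfl fun _ _ => by ring

lemma phatH2_eq [DecidableEq H] (hA1 : ∀ h, ∑ h', A h' h = 1) (μ π : H → ℝ) {T : ℕ}
    (x : Fin T → X) (g : H) :
    phatH2 A μ W π x g = (A *ᵥ fun h => (A *ᵥ μ) h * π h) g * hmmLik A W (List.ofFn x) g := by
  have hofn : (List.ofFn fun k g' => W (x k) g') = (List.ofFn x).map fun z h => W z h := by
    rw [List.map_ofFn]; rfl
  rw [phatH2, fwdVec, fwdVec, hofn, sum_fwdVec_mulVec_map hA1,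
    sum_eq_single g (by simp_all) (by simp)]
  simp

end HMM

theorem stmt5_general {H X : Type*} [Fintype H] [Fintype X] [DecidableEq H]
    (μ : H → ℝ) (A : Matrix H H ℝ) (W : X → H → ℝ)
    (hA0 : ∀ h h', 0 ≤ A h' h) (hA1 : ∀ h, ∑ h', A h' h = 1)
    (hW0 : ∀ z h, 0 ≤ W z h)
    -- regularity
    (hErg : ∃ n₀ : ℕ, ∀ n ≥ n₀, ∀ h h' : H, 0 < (A ^ n) h' h)
    (hfull : ∀ h, 0 < μ h)
    (T : ℕ) (b : H → ℝ)
    -- relaxed non-degeneracy condition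
    (Hstar Bset : Finset H)
    (hli : LinearIndependent ℝ
      (fun h : {h : H // h ∈ Hstar} => fun z : X => W z h.1))
    (hsupp : ∀ h, b h ≠ 0 → h ∈ Hstar)
    (hreach : ∀ g : H, g ∈ Hstar ↔ ∃ h ∈ Bset, A g h ≠ 0) :
    ∃ π : H → ℝ, (∀ h, 0 ≤ π h ∧ π h ≤ 1) ∧
      ∃ u : X → ℝ, ∀ x : Fin T → X,
        0 < ∑ h, μ h * hmmLik A W (List.ofFn x) h →
        (0 ≤ ∑ h, b h *
            (μ h * hmmLik A W (List.ofFn x) h /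
              ∑ h', μ h' * hmmLik A W (List.ofFn x) h')
          ↔ 0 ≤ ∑ z, u z *
              (if 0 < ∑ g, phatH2 A μ W π x g then
                (∑ g, W z g * phatH2 A μ W π x g) / (∑ g, phatH2 A μ W π x g)
              else 0)) := by
  obtain ⟨n₀, hpow⟩ := hErg
  have hH1 : ∀ h, 0 < (A *ᵥ μ) h :=
    mulVec_pos_of_pow_succ_diag_pos hA0 (fun h => hpow (n₀ + 1) (by omega) h h) hfull
  set π : H → ℝ := fun h => if h ∈ Bset then 1 else 0
  set ν := A *ᵥ fun h => (A *ᵥ μ) h * π h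
  have hν0 : ∀ g, 0 ≤ ν g := mulVec_mul_indicator_nonneg hA0 Bset fun h => (hH1 h).le
  have hνpos : ∀ g, 0 < ν g ↔ g ∈ Hstar := fun g =>
    (mulVec_mul_indicator_pos_iff hA0 Bset hH1 g).trans (hreach g).symm
  obtain ⟨u, hu⟩ := exists_sum_mul_eq_of_linearIndependent hli fun g => b g * μ g / ν g.1
  have hweight : ∀ g, (∑ z, u z * W z g) * ν g = b g * μ g := fun g => by
    by_cases hg : g ∈ Hstar
    · rw [hu ⟨g, hg⟩, div_mul_cancel₀ _ ((hνpos g).2 hg).ne']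
    · rw [le_antisymm (not_lt.1 (mt (hνpos g).1 hg)) (hν0 g), not_not.1 (mt (hsupp g) hg)]
      ring
  refine ⟨π, fun h => by simp only [π]; split_ifs <;> norm_num, u, fun x hx => ?_⟩
  simp only [phatH2_eq hA1]
  rw [sum_mul_div_sum_nonneg_iff _ _ hx,
    sum_mul_condMean_nonneg_iff _ _ fun g => mul_nonneg (hν0 g) (hmmLik_nonneg hA0 hW0 _ g)]
  simp only [← mul_assoc, hweight]

theorem stmt5 {H X : Type*} [Fintype H] [Fintype X] [DecidableEq H]
    (μ : H → ℝ) (A : Matrix H H ℝ) (W : X → H → ℝ)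
    (hμ0 : ∀ h, 0 ≤ μ h) (hμ1 : ∑ h, μ h = 1)
    (hA0 : ∀ h h', 0 ≤ A h' h) (hA1 : ∀ h, ∑ h', A h' h = 1)
    (hW0 : ∀ z h, 0 ≤ W z h) (hW1 : ∀ h, ∑ z, W z h = 1)
    -- regularity
    (hErg : ∃ n₀ : ℕ, ∀ n ≥ n₀, ∀ h h' : H, 0 < (A ^ n) h' h)
    (hfull : ∀ h, 0 < μ h)
    (T : ℕ) (b : H → ℝ)
    -- relaxed non-degeneracy condition
    (Hstar Bset : Finset H)
    (hli : LinearIndependent ℝ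
      (fun h : {h : H // h ∈ Hstar} => fun z : X => W z h.1))
    (hsupp : ∀ h, b h ≠ 0 → h ∈ Hstar)
    (hreach : ∀ g : H, g ∈ Hstar ↔ ∃ h ∈ Bset, A g h ≠ 0) :
    ∃ π : H → ℝ, (∀ h, 0 ≤ π h ∧ π h ≤ 1) ∧
      ∃ u : X → ℝ, ∀ x : Fin T → X,
        0 < ∑ h, μ h * hmmLik A W (List.ofFn x) h →
        (0 ≤ ∑ h, b h *
            (μ h * hmmLik A W (List.ofFn x) h /
              ∑ h', μ h' * hmmLik A W (List.ofFn x) h')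
          ↔ 0 ≤ ∑ z, u z *
              (if 0 < ∑ g, phatH2 A μ W π x g then
                (∑ g, W z g * phatH2 A μ W π x g) / (∑ g, phatH2 A μ W π x g)
              else 0)) :=
  stmt5_general μ A W hA0 hA1 hW0 hErg hfull T b Hstar Bset hli hsupp hreach

end
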